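/- In the system on ℝ² with dynamics ẋ₁ = cos(u), ẋ₂ = sin(u), u ∈ [0,π] (so admissible velocities are F(x) = {(cos u, sin u) : u ∈ [0,π]}), obstacle X_obst = (−∞,0]×(−∞,0], free space its complement, and cost equal to time: for every point x = (x₁, x₂) ∈ X_free with x₂ ≤ 0 (hence x₁ > 0), the clearance clr(x) equals x₁; and for every x ∈ X_free with x₂ > 0, clr(x) = ∞. -/

import Mathlib

/-!
Admissible velocities have first component at least `-1` and nonnegative second component, so
a trajectory of duration `T` that ends on the obstacle, where both coordinates are `≤ 0`,
forces `x₁ ≤ T` and `x₂ ≤ 0`. Moving straight left (`u = π`) reaches the boundary in time `x₁`.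
-/

open Set MeasureTheory ENNReal

/-- Sharp-corner obstacle. -/
def CornerObst : Set (ℝ × ℝ) := Iic (0:ℝ) ×ˢ Iic (0:ℝ)

/-- Free space: complement of the sharp corner. -/
def CornerFree : Set (ℝ × ℝ) := CornerObstᶜ

/-- Admissible velocities: unit vectors `(cos u, sin u)` with `u ∈ [0, π]`. -/
def HorizVel : Set (ℝ × ℝ) := {v | ∃ u ∈ Icc (0:ℝ) Real.pi, v = (Real.cos u, Real.sin u)}

/-- Admissible trajectories of the system `ẋ = (cos u, sin u)`, `u ∈ [0,π]`, from `x`,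
ending on the obstacle boundary at time `T`, staying in the closure of free space. -/
def HorizAdm (x : ℝ × ℝ) (T : ℝ) : Prop :=
  0 ≤ T ∧ ∃ π : ℝ → ℝ × ℝ, ∃ v : ℝ → ℝ × ℝ,
    π 0 = x ∧ π T ∈ frontier CornerObst ∧
    (∀ t ∈ Icc (0:ℝ) T, π t ∈ closure CornerFree) ∧
    IntervalIntegrable v MeasureTheory.volume 0 T ∧
    (∀ᵐ t ∂(MeasureTheory.volume.restrict (Icc (0:ℝ) T)), v t ∈ HorizVel) ∧
    (∀ t ∈ Icc (0:ℝ) T, π t = x + ∫ s in (0:ℝ)..t, v s)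

/-- Clearance for the horizontal-motion system: infimal time to reach the obstacle
boundary (`⊤` if unreachable). -/
noncomputable def horizClr (x : ℝ × ℝ) : ℝ≥0∞ :=
  sInf {c : ℝ≥0∞ | ∃ T : ℝ, HorizAdm x T ∧ c = ENNReal.ofReal T}

lemma isClosed_cornerObst : IsClosed CornerObst :=
  isClosed_Iic.prod isClosed_Iic

lemma frontier_cornerObst :
    frontier CornerObst = Iic (0:ℝ) ×ˢ {(0:ℝ)} ∪ {(0:ℝ)} ×ˢ Iic (0:ℝ) := by
  rw [CornerObst, frontier_prod_eq, frontier_Iic, closure_Iic]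

lemma closure_cornerFree : closure CornerFree = (Iio (0:ℝ) ×ˢ Iio (0:ℝ))ᶜ := by
  rw [CornerFree, closure_compl, CornerObst, interior_prod_eq, interior_Iic]

lemma horizVel_subset : HorizVel ⊆ {w | -1 ≤ w.1 ∧ 0 ≤ w.2} := by
  rintro _ ⟨u, hu, rfl⟩
  exact ⟨Real.neg_one_le_cos u, Real.sin_nonneg_of_nonneg_of_le_pi hu.1 hu.2⟩

section VelocityIntegral

variable {v : ℝ → ℝ × ℝ} {T : ℝ}

lemma fst_intervalIntegral (hv : IntervalIntegrable v volume 0 T) :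
    (∫ s in (0:ℝ)..T, v s).1 = ∫ s in (0:ℝ)..T, (v s).1 :=
  ((ContinuousLinearMap.fst ℝ ℝ ℝ).intervalIntegral_comp_comm hv).symm

lemma snd_intervalIntegral (hv : IntervalIntegrable v volume 0 T) :
    (∫ s in (0:ℝ)..T, v s).2 = ∫ s in (0:ℝ)..T, (v s).2 :=
  ((ContinuousLinearMap.snd ℝ ℝ ℝ).intervalIntegral_comp_comm hv).symm

variable (hT : 0 ≤ T) (hvi : IntervalIntegrable v volume 0 T)
  (hv : ∀ᵐ t ∂volume.restrict (Icc (0:ℝ) T), v t ∈ HorizVel)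
include hT hvi hv

lemma neg_le_fst_intervalIntegral_of_ae_mem_horizVel :
    -T ≤ (∫ s in (0:ℝ)..T, v s).1 := by
  have hbound : ∀ᵐ t ∂volume.restrict (Icc (0:ℝ) T), (-1 : ℝ) ≤ (v t).1 :=
    hv.mono fun t ht => (horizVel_subset ht).1
  have := intervalIntegral.integral_mono_ae_restrict hT intervalIntegrable_const
    ⟨hvi.1.fst, hvi.2.fst⟩ hbound
  simpa [fst_intervalIntegral hvi] using this

lemma snd_intervalIntegral_nonneg_of_ae_mem_horizVel :
    0 ≤ (∫ s in (0:ℝ)..T, v s).2 := by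
  rw [snd_intervalIntegral hvi]
  exact intervalIntegral.integral_nonneg_of_ae_restrict hT
    (hv.mono fun t ht => (horizVel_subset ht).2)

end VelocityIntegral

namespace HorizAdm

variable {x : ℝ × ℝ} {T : ℝ}

lemma exists_add_mem_cornerObst (h : HorizAdm x T) :
    ∃ d : ℝ × ℝ, -T ≤ d.1 ∧ 0 ≤ d.2 ∧ x + d ∈ CornerObst := by
  obtain ⟨hT, p, v, -, hpT, -, hvi, hv, hp⟩ := h
  refine ⟨∫ s in (0:ℝ)..T, v s, neg_le_fst_intervalIntegral_of_ae_mem_horizVel hT hvi hv,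
    snd_intervalIntegral_nonneg_of_ae_mem_horizVel hT hvi hv, ?_⟩
  rw [← hp T ⟨hT, le_rfl⟩]
  exact isClosed_cornerObst.frontier_subset hpT

lemma fst_le (h : HorizAdm x T) : x.1 ≤ T := by
  obtain ⟨d, hd, -, hmem, -⟩ := h.exists_add_mem_cornerObst
  have : x.1 + d.1 ≤ 0 := hmem
  linarith

lemma snd_nonpos (h : HorizAdm x T) : x.2 ≤ 0 := by
  obtain ⟨d, -, hd, -, hmem⟩ := h.exists_add_mem_cornerObst
  have : x.2 + d.2 ≤ 0 := hmem
  linarith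

end HorizAdm

lemma horizAdm_fst {x : ℝ × ℝ} (h₁ : 0 ≤ x.1) (h₂ : x.2 ≤ 0) : HorizAdm x x.1 := by
  refine ⟨h₁, fun t => (x.1 - t, x.2), fun _ => (-1, 0), by simp, ?_, ?_,
    intervalIntegrable_const, ?_, ?_⟩
  · rw [frontier_cornerObst]
    exact Or.inr ⟨by simp, by simpa using h₂⟩
  · rintro t ⟨-, ht⟩
    rw [closure_cornerFree]
    rintro ⟨hlt, -⟩
    exact (sub_nonneg.2 ht).not_gt hlt
  · exact .of_forall fun _ => ⟨Real.pi, ⟨Real.pi_pos.le, le_rfl⟩, by simp⟩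
  · intro t _
    rw [intervalIntegral.integral_const]
    ext <;> simp [sub_eq_add_neg]

lemma horizClr_eq_ofReal_fst {x : ℝ × ℝ} (h₁ : 0 ≤ x.1) (h₂ : x.2 ≤ 0) :
    horizClr x = ENNReal.ofReal x.1 :=
  le_antisymm (sInf_le ⟨x.1, horizAdm_fst h₁ h₂, rfl⟩) <| le_sInf <| by
    rintro c ⟨T, hT, rfl⟩
    exact ENNReal.ofReal_le_ofReal hT.fst_le

lemma horizClr_eq_top {x : ℝ × ℝ} (h : 0 < x.2) : horizClr x = ⊤ :=
  sInf_eq_top.2 fun _ ⟨_, hT, _⟩ => absurd hT.snd_nonpos h.not_ge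

/-- For the system admitting horizontal motion: clearance equals `x₁` in the lower
half-plane part of free space and is infinite above it. -/
theorem horiz_clearance :
    ∀ x : ℝ × ℝ, x ∈ CornerFree →
      (x.2 ≤ 0 → horizClr x = ENNReal.ofReal x.1) ∧
      (0 < x.2 → horizClr x = ⊤) := by
  intro x hx
  refine ⟨fun h₂ => horizClr_eq_ofReal_fst ?_ h₂, horizClr_eq_top⟩
  by_contra h₁
  exact hx ⟨(not_le.1 h₁).le, h₂⟩
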